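/- Define mutually recursive LTL formula families φ_{R,0} = FG a₀ ∧ GF b₀, φ_{R,n+1} = (FG a_{n+1} ∧ GF b_{n+1}) ∨ φ_{S,n}, φ_{S,0} = FG a₀ ∨ GF b₀, φ_{S,n+1} = (FG a_{n+1} ∨ GF b_{n+1}) ∧ φ_{R,n}, over distinct atomic propositions a₀,b₀,…,a_n,b_n. Call the subformulas FG a_j and GF b_j leafs, and call a set L of leafs a good leaf set for φ if L is a minimal set of leafs whose truth (treating leafs as propositional variables, setting those in L true and all others false) makes φ propositionally true. Then the number of good leaf sets of φ_{R,n} (and of φ_{S,n}) is at least 2^{⌊n/2⌋}. -/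

import Mathlib

/-- positive propositional formulas over variables V -/
inductive PForm (V : Type) : Type
  | var : V → PForm V
  | and : PForm V → PForm V → PForm V
  | or : PForm V → PForm V → PForm V

/-- propositional satisfaction by an assignment (set of true variables) -/
def PSat {V : Type} (S : Set V) : PForm V → Prop
  | .var v => v ∈ S
  | .and a b => PSat S a ∧ PSat S b
  | .or a b => PSat S a ∨ PSat S b

-- leafs: (false, j) stands for FG a_j, (true, j) stands for GF b_j
mutual
def phiR : ℕ → PForm (Bool × ℕ)
  | 0 => .and (.var (false, 0)) (.var (true, 0))
  | n + 1 => .or (.and (.var (false, n + 1)) (.var (true, n + 1))) (phiS n)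
def phiS : ℕ → PForm (Bool × ℕ)
  | 0 => .or (.var (false, 0)) (.var (true, 0))
  | n + 1 => .and (.or (.var (false, n + 1)) (.var (true, n + 1))) (phiR n)
end

/-- a good leaf set: a minimal satisfying set of leafs -/
def GoodLeaf (L : Set (Bool × ℕ)) (φ : PForm (Bool × ℕ)) : Prop :=
  PSat L φ ∧ ∀ L' ⊂ L, ¬ PSat L' φ


/-!
Every good leaf set of `φ_{S,n}` is one of `φ_{R,n+1}`, and adding either leaf of level `n + 1`
(`FG a_{n+1}` or `GF b_{n+1}`) to a good leaf set of `φ_{R,n}` gives two distinct good leaf sets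
of `φ_{S,n+1}`. Hence the number of good leaf sets at least doubles every two levels.
-/

open Set

def PForm.vars {V : Type} : PForm V → Set V
  | .var v => {v}
  | .and a b => a.vars ∪ b.vars
  | .or a b => a.vars ∪ b.vars

theorem PForm.vars_finite {V : Type} (φ : PForm V) : φ.vars.Finite := by
  induction φ with
  | var v => exact finite_singleton v
  | and a b ha hb => exact ha.union hb
  | or a b ha hb => exact ha.union hb

theorem PSat.of_inter_vars_subset {V : Type} {S T : Set V} {φ : PForm V} (h : PSat S φ)
    (hST : S ∩ φ.vars ⊆ T) : PSat T φ := by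
  induction φ with
  | var v => exact hST ⟨h, rfl⟩
  | and a b ha hb =>
    exact ⟨ha h.1 fun z hz => hST ⟨hz.1, .inl hz.2⟩,
      hb h.2 fun z hz => hST ⟨hz.1, .inr hz.2⟩⟩
  | or a b ha hb =>
    exact h.imp (ha · fun z hz => hST ⟨hz.1, .inl hz.2⟩)
      (hb · fun z hz => hST ⟨hz.1, .inr hz.2⟩)

theorem PSat.mono {V : Type} {S T : Set V} {φ : PForm V} (h : PSat S φ) (hST : S ⊆ T) :
    PSat T φ :=
  h.of_inter_vars_subset (inter_subset_left.trans hST)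

namespace GoodLeaf

variable {L : Set (Bool × ℕ)} {φ : PForm (Bool × ℕ)}

theorem eq_of_subset (hL : GoodLeaf L φ) {L' : Set (Bool × ℕ)} (hsub : L' ⊆ L)
    (hsat : PSat L' φ) : L' = L :=
  by_contra fun hne => hL.2 L' (hsub.ssubset_of_ne hne) hsat

theorem subset_vars (hL : GoodLeaf L φ) : L ⊆ φ.vars :=
  inter_eq_left.mp (hL.eq_of_subset inter_subset_left (hL.1.of_inter_vars_subset subset_rfl))

end GoodLeaf

theorem setOf_goodLeaf_finite (φ : PForm (Bool × ℕ)) : {L | GoodLeaf L φ}.Finite :=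
  φ.vars_finite.finite_subsets.subset fun _ hL => GoodLeaf.subset_vars hL

theorem one_le_ncard_setOf_goodLeaf {L : Set (Bool × ℕ)} {φ : PForm (Bool × ℕ)}
    (hL : GoodLeaf L φ) : 1 ≤ {L | GoodLeaf L φ}.ncard :=
  (ncard_pos (setOf_goodLeaf_finite φ)).mpr ⟨L, hL⟩

theorem snd_le_of_mem_vars_phiR_phiS (n : ℕ) :
    (∀ p ∈ (phiR n).vars, p.2 ≤ n) ∧ (∀ p ∈ (phiS n).vars, p.2 ≤ n) := by
  induction n with
  | zero => simp +contextual [phiR, phiS, PForm.vars, or_imp]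
  | succ n ih =>
    simp only [phiR, phiS, PForm.vars, mem_union, mem_singleton_iff]
    constructor <;> rintro p ((rfl | rfl) | hp) <;> grind

namespace GoodLeaf

variable {L : Set (Bool × ℕ)} {n : ℕ}

theorem snd_le_of_phiR (hL : GoodLeaf L (phiR n)) {p : Bool × ℕ} (hp : p ∈ L) : p.2 ≤ n :=
  (snd_le_of_mem_vars_phiR_phiS n).1 p (hL.subset_vars hp)

theorem snd_le_of_phiS (hL : GoodLeaf L (phiS n)) {p : Bool × ℕ} (hp : p ∈ L) : p.2 ≤ n :=
  (snd_le_of_mem_vars_phiR_phiS n).2 p (hL.subset_vars hp)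

theorem phiR_succ (hL : GoodLeaf L (phiS n)) : GoodLeaf L (phiR (n + 1)) := by
  refine ⟨.inr hL.1, fun L' hL' hsat => ?_⟩
  rcases hsat with ⟨hmem, -⟩ | hsat
  · exact absurd (hL.snd_le_of_phiS (hL'.1 hmem)) (Nat.not_succ_le_self n)
  · exact hL.2 L' hL' hsat

/-- The new leaf is needed for the top disjunction, and minimality for `phiR n` forces the
rest of any satisfying subset. -/
theorem phiS_succ_insert (hL : GoodLeaf L (phiR n)) (c : Bool) :
    GoodLeaf (insert (c, n + 1) L) (phiS (n + 1)) := by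
  have hsat : PSat (insert (c, n + 1) L) (phiS (n + 1)) :=
    ⟨by cases c <;> simp [PSat], hL.1.mono (subset_insert _ _)⟩
  refine ⟨hsat, fun L' hL' ⟨htop, hR⟩ => hL'.2 ?_⟩
  have hLL' : L ⊆ L' := by
    refine inter_eq_right.mp (hL.eq_of_subset inter_subset_right (hR.of_inter_vars_subset ?_))
    rintro p ⟨hpL', hpR⟩
    refine ⟨hpL', (hL'.1 hpL').resolve_left fun hp => ?_⟩
    have := (snd_le_of_mem_vars_phiR_phiS n).1 p hpR
    simp_all
  have hc : (c, n + 1) ∈ L' := by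
    obtain ⟨b, hb⟩ : ∃ b : Bool, (b, n + 1) ∈ L' := htop.elim (⟨_, ·⟩) (⟨_, ·⟩)
    rcases hL'.1 hb with h | h
    · rwa [← h]
    · exact absurd (hL.snd_le_of_phiR h) (Nat.not_succ_le_self n)
  exact insert_subset hc hLL'

end GoodLeaf

theorem goodLeaf_phiR_zero : GoodLeaf {(false, 0), (true, 0)} (phiR 0) :=
  ⟨⟨.inl rfl, .inr rfl⟩, fun _ hL' ⟨hfalse, htrue⟩ =>
    hL'.2 (insert_subset hfalse (singleton_subset_iff.mpr htrue))⟩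

theorem goodLeaf_phiS_zero : GoodLeaf {(false, 0)} (phiS 0) := by
  refine ⟨.inl rfl, fun L' hL' hsat => ?_⟩
  rw [ssubset_singleton_iff] at hL'
  subst hL'
  rcases hsat with h | h <;> exact h

theorem eq_and_eq_of_insert_eq_insert {α : Type*} {x y : α} {s t : Set α} (hxt : x ∉ t)
    (hys : y ∉ s) (h : insert x s = insert y t) : x = y ∧ s = t := by
  have hxy : x = y := ((h ▸ mem_insert x s : x ∈ insert y t)).resolve_right hxt
  subst hxy
  refine ⟨rfl, ?_⟩
  rw [← insert_sdiff_self_of_notMem hys, h, insert_sdiff_self_of_notMem hxt]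

theorem ncard_goodLeaf_phiS_le_phiR_succ (n : ℕ) :
    {L | GoodLeaf L (phiS n)}.ncard ≤ {L | GoodLeaf L (phiR (n + 1))}.ncard :=
  ncard_le_ncard (fun _ hL => GoodLeaf.phiR_succ hL) (setOf_goodLeaf_finite _)

theorem two_mul_ncard_goodLeaf_phiR_le (n : ℕ) :
    2 * {L | GoodLeaf L (phiR n)}.ncard ≤ {L | GoodLeaf L (phiS (n + 1))}.ncard := by
  have hinj : InjOn (fun p : Bool × Set (Bool × ℕ) => insert (p.1, n + 1) p.2)
      (univ ×ˢ {L | GoodLeaf L (phiR n)}) := by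
    rintro ⟨c, L⟩ ⟨-, hL⟩ ⟨c', L'⟩ ⟨-, hL'⟩ h
    obtain ⟨hc, rfl⟩ := eq_and_eq_of_insert_eq_insert
      (fun hmem => by simpa using GoodLeaf.snd_le_of_phiR hL' hmem)
      (fun hmem => by simpa using GoodLeaf.snd_le_of_phiR hL hmem) h
    simp_all
  calc 2 * {L | GoodLeaf L (phiR n)}.ncard
      = (univ ×ˢ {L | GoodLeaf L (phiR n)}).ncard := by simp [ncard_prod]
    _ ≤ _ := ncard_le_ncard_of_injOn _ (fun p hp => GoodLeaf.phiS_succ_insert hp.2 p.1) hinj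
        (setOf_goodLeaf_finite _)

theorem pow_le_ncard_goodLeaf_phiR : ∀ n : ℕ, 2 ^ (n / 2) ≤ {L | GoodLeaf L (phiR n)}.ncard
  | 0 => one_le_ncard_setOf_goodLeaf goodLeaf_phiR_zero
  | 1 => one_le_ncard_setOf_goodLeaf goodLeaf_phiS_zero.phiR_succ
  | n + 2 => calc
      2 ^ ((n + 2) / 2) = 2 * 2 ^ (n / 2) := by rw [Nat.add_div_right n two_pos, pow_succ']
      _ ≤ 2 * {L | GoodLeaf L (phiR n)}.ncard :=
          Nat.mul_le_mul_left 2 (pow_le_ncard_goodLeaf_phiR n)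
      _ ≤ {L | GoodLeaf L (phiS (n + 1))}.ncard := two_mul_ncard_goodLeaf_phiR_le n
      _ ≤ _ := ncard_goodLeaf_phiS_le_phiR_succ (n + 1)

theorem many_good_leaf_sets (n : ℕ) :
    2 ^ (n / 2) ≤ {L : Set (Bool × ℕ) | GoodLeaf L (phiR n)}.ncard ∧
    2 ^ (n / 2) ≤ {L : Set (Bool × ℕ) | GoodLeaf L (phiS n)}.ncard := by
  refine ⟨pow_le_ncard_goodLeaf_phiR n, ?_⟩
  cases n with
  | zero => exact one_le_ncard_setOf_goodLeaf goodLeaf_phiS_zero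
  | succ n =>
    calc 2 ^ ((n + 1) / 2) ≤ 2 * 2 ^ (n / 2) := by
          rw [← pow_succ']; exact Nat.pow_le_pow_right two_pos (by omega)
      _ ≤ 2 * {L | GoodLeaf L (phiR n)}.ncard :=
          Nat.mul_le_mul_left 2 (pow_le_ncard_goodLeaf_phiR n)
      _ ≤ _ := two_mul_ncard_goodLeaf_phiR_le n
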